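/- Let n ≥ 2 be an integer, β ∈ (0,1/2), and d > 1, and let p : (0,∞) × (0,∞) → [0,∞) be measurable with p(η,t) ≤ d g_n(η,t) for all η, t > 0. Then for every x̃ > 0, limsup_{t→∞} t^{2β−1} · log ( ∫_{{η > 0 : η ≥ x̃ t^{1−β} + (n−1)t}} p(η,t) dη ) ≤ −x̃²/4. -/

import Mathlib

open MeasureTheory Real Filter

/-- The Davies–Mandouvalos comparison function `g_n(η,t)` for the radial density of
hyperbolic Brownian motion on the `n`-dimensional Poincaré half-space. -/
noncomputable def hypg (n : ℕ) (η t : ℝ) : ℝ :=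
  t ^ (-(n : ℝ) / 2) * (η / (1 + η)) ^ (n - 1) *
    Real.exp (-(η - ((n : ℝ) - 1) * t) ^ 2 / (4 * t)) *
    (1 + η + t) ^ (((n : ℝ) - 3) / 2) * (1 + η)

/-!
For `t ≥ 1` and every slope `λ`, completing the square gives `exp (-u²/4t) ≤ exp (λ²t - λu)`,
where `u = η - (n-1)t`, and the polynomial factors of `g_n` are at most `n! tⁿ e^{n+1} e^{u/t}`
(from `yⁿ/n! ≤ e^y` with `y = (1+η+t)/t`). Hence `g_n(η,t) ≤ n! tⁿ e^{n+1} e^{λ²t - (λ-1/t)u}`,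
whose tail over `u ≥ x̃ t^{1-β}` integrates in closed form. The choice `λ = x̃ t^{-β}/2` gives the
bound `C t^{n+1} exp (-x̃² t^{1-2β}/4 + x̃ t^{-β})`, and after taking logarithms and multiplying
by `t^{2β-1}` the prefactor only contributes `O(t^{2β-1} log t) → 0`.
-/

open Set Topology

lemma pow_le_factorial_mul_pow_mul_exp (n : ℕ) {y c : ℝ} (hy : 0 ≤ y) (hc : 0 < c) :
    y ^ n ≤ n.factorial * c ^ n * exp (y / c) := by
  have h := pow_div_factorial_le_exp _ (div_nonneg hy hc.le) n
  rw [div_pow, div_div, div_le_iff₀ (by positivity)] at h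
  linarith

lemma hypg_le_pow_mul_exp (n : ℕ) {η t : ℝ} (hη : 0 < η) (ht : 1 ≤ t) :
    hypg n η t ≤ (1 + η + t) ^ n * exp (-(η - ((n : ℝ) - 1) * t) ^ 2 / (4 * t)) := by
  have hbase : 1 ≤ 1 + η + t := by linarith
  have hn : (0 : ℝ) ≤ n := n.cast_nonneg
  have htime : t ^ (-(n : ℝ) / 2) ≤ 1 := rpow_le_one_of_one_le_of_nonpos ht (by linarith)
  have hratio : (η / (1 + η)) ^ (n - 1) ≤ 1 :=
    pow_le_one₀ (by positivity) ((div_le_one (by positivity)).2 (by linarith))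
  have hpoly : (1 + η + t) ^ (((n : ℝ) - 3) / 2) * (1 + η) ≤ (1 + η + t) ^ n := calc
    _ ≤ (1 + η + t) ^ (((n : ℝ) - 3) / 2) * (1 + η + t) ^ (1 : ℝ) := by
        rw [rpow_one]; exact mul_le_mul_of_nonneg_left (by linarith) (by positivity)
    _ = (1 + η + t) ^ (((n : ℝ) - 3) / 2 + 1) := (rpow_add (by positivity) _ _).symm
    _ ≤ (1 + η + t) ^ (n : ℝ) := rpow_le_rpow_of_exponent_le hbase (by linarith)
    _ = (1 + η + t) ^ n := rpow_natCast _ _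
  calc hypg n η t = t ^ (-(n : ℝ) / 2) * (η / (1 + η)) ^ (n - 1) *
        ((1 + η + t) ^ (((n : ℝ) - 3) / 2) * (1 + η)) *
        exp (-(η - ((n : ℝ) - 1) * t) ^ 2 / (4 * t)) := by unfold hypg; ring
    _ ≤ 1 * 1 * (1 + η + t) ^ n * exp (-(η - ((n : ℝ) - 1) * t) ^ 2 / (4 * t)) := by
        gcongr
    _ = _ := by ring

lemma hypg_le_factorial_mul_exp (n : ℕ) {η t : ℝ} (hη : 0 < η) (ht : 1 ≤ t) (lam : ℝ) :
    hypg n η t ≤ n.factorial * t ^ n * exp (n + 1) *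
      exp (lam ^ 2 * t - (lam - 1 / t) * (η - ((n : ℝ) - 1) * t)) := by
  set u := η - ((n : ℝ) - 1) * t
  have ht0 : 0 < t := by linarith
  have hpoly : (1 + η + t) ^ n ≤ n.factorial * t ^ n * exp (n + 1 + u / t) := calc
    _ ≤ n.factorial * t ^ n * exp ((1 + η + t) / t) :=
        pow_le_factorial_mul_pow_mul_exp n (by positivity) ht0
    _ ≤ n.factorial * t ^ n * exp (n + 1 + u / t) := by
        gcongr
        rw [div_le_iff₀ ht0, add_mul, div_mul_cancel₀ _ ht0.ne']
        linarith
  have hgauss : -u ^ 2 / (4 * t) ≤ lam ^ 2 * t - lam * u := by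
    rw [div_le_iff₀ (by positivity)]
    nlinarith [sq_nonneg (u - 2 * lam * t)]
  calc hypg n η t ≤ (1 + η + t) ^ n * exp (-u ^ 2 / (4 * t)) := hypg_le_pow_mul_exp n hη ht
    _ ≤ n.factorial * t ^ n * exp (n + 1 + u / t) * exp (lam ^ 2 * t - lam * u) := by
        gcongr
    _ = _ := by
        rw [mul_assoc _ (exp _), ← exp_add, mul_assoc _ (exp _), ← exp_add]
        ring_nf

lemma lintegral_ofReal_exp_neg_mul_Ici {m : ℝ} (hm : 0 < m) (c : ℝ) :
    ∫⁻ x in Ici c, ENNReal.ofReal (exp (-(m * x))) = ENNReal.ofReal (exp (-(m * c)) / m) := by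
  have hneg : -m < 0 := neg_lt_zero.2 hm
  rw [← setLIntegral_congr Ioi_ae_eq_Ici, ← ofReal_integral_eq_lintegral_ofReal]
  · simp_rw [← neg_mul, integral_exp_mul_Ioi hneg, neg_div_neg_eq]
  · simp_rw [← neg_mul]; exact integrableOn_exp_mul_Ioi hneg c
  · exact ae_of_all _ fun x => (exp_pos _).le

lemma lintegral_tail_le_of_le_hypg (n : ℕ) {d : ℝ} (hd : 0 ≤ d) {p : ℝ → ℝ → ℝ}
    (hp_le : ∀ η t : ℝ, 0 < η → 0 < t → p η t ≤ d * hypg n η t) {t lam : ℝ} (ht : 1 ≤ t)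
    (hlam : 1 / t < lam) (a : ℝ) :
    ∫⁻ η in {η : ℝ | 0 < η ∧ a + ((n : ℝ) - 1) * t ≤ η}, ENNReal.ofReal (p η t) ≤
      ENNReal.ofReal (d * n.factorial * t ^ n * exp (n + 1) *
        exp (lam ^ 2 * t - (lam - 1 / t) * a) / (lam - 1 / t)) := by
  set m := lam - 1 / t
  have hm : 0 < m := sub_pos.2 hlam
  set A := a + ((n : ℝ) - 1) * t
  set K := d * n.factorial * t ^ n * exp (n + 1) * exp (lam ^ 2 * t + m * ((n : ℝ) - 1) * t)
  have hK : 0 ≤ K := by positivity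
  have hpoint : ∀ η ∈ {η : ℝ | 0 < η ∧ A ≤ η},
      ENNReal.ofReal (p η t) ≤ ENNReal.ofReal K * ENNReal.ofReal (exp (-(m * η))) := by
    rintro η ⟨hη, -⟩
    rw [← ENNReal.ofReal_mul hK]
    refine ENNReal.ofReal_le_ofReal ?_
    calc p η t ≤ d * hypg n η t := hp_le η t hη (by linarith)
      _ ≤ d * (n.factorial * t ^ n * exp (n + 1) *
          exp (lam ^ 2 * t - m * (η - ((n : ℝ) - 1) * t))) := by
        gcongr; exact hypg_le_factorial_mul_exp n hη ht lam
      _ = K * exp (-(m * η)) := by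
        simp only [K, mul_assoc, ← exp_add]; ring_nf
  calc ∫⁻ η in {η : ℝ | 0 < η ∧ A ≤ η}, ENNReal.ofReal (p η t)
      ≤ ∫⁻ η in {η : ℝ | 0 < η ∧ A ≤ η}, ENNReal.ofReal K * ENNReal.ofReal (exp (-(m * η))) :=
        setLIntegral_mono (by fun_prop) hpoint
    _ ≤ ∫⁻ η in Ici A, ENNReal.ofReal K * ENNReal.ofReal (exp (-(m * η))) :=
        lintegral_mono_set fun η hη => hη.2
    _ = ENNReal.ofReal (K * (exp (-(m * A)) / m)) := by
        rw [lintegral_const_mul _ (by fun_prop), lintegral_ofReal_exp_neg_mul_Ici hm,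
          ENNReal.ofReal_mul hK]
    _ = _ := by
        congr 1
        simp only [K, A, mul_div_assoc', mul_assoc, ← exp_add]
        ring_nf

lemma chernoff_exponent_eq {t : ℝ} (ht : 0 < t) (x β : ℝ) :
    (x * t ^ (-β) / 2) ^ 2 * t - (x * t ^ (-β) / 2 - 1 / t) * (x * t ^ (1 - β)) =
      -(x ^ 2 / 4) * t ^ (1 - 2 * β) + x * t ^ (-β) := by
  rw [show 1 - 2 * β = 1 + (-β + -β) by ring, show 1 - β = 1 + -β by ring, rpow_add ht 1,
    rpow_add ht 1, rpow_add ht (-β), rpow_one]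
  field_simp
  ring

lemma le_chernoff_slope_sub {t x β : ℝ} (ht : 1 ≤ t) (hβ : β ≤ 1) (hx0 : 0 < x)
    (hx : 4 ≤ x * t ^ (1 - β)) : x / (4 * t) ≤ x * t ^ (-β) / 2 - 1 / t := by
  have ht0 : 0 < t := by linarith
  rw [show 1 - β = 1 + -β by ring, rpow_add ht0, rpow_one] at hx
  have hpow : t⁻¹ ≤ t ^ (-β) := by
    simpa only [rpow_neg_one] using rpow_le_rpow_of_exponent_le ht (neg_le_neg hβ)
  have hx_le : x ≤ x * (t * t ^ (-β)) := calc
    x = x * (t * t⁻¹) := by field_simp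
    _ ≤ x * (t * t ^ (-β)) := by gcongr
  have hexpand : (x * t ^ (-β) / 2 - 1 / t) * (4 * t) = 2 * (x * (t * t ^ (-β))) - 4 := by
    field_simp; ring
  rw [div_le_iff₀ (by positivity), hexpand]
  linarith

lemma tendsto_rpow_mul_log_atTop {r : ℝ} (hr : r < 0) :
    Tendsto (fun t : ℝ => t ^ r * log t) atTop (𝓝 0) := by
  refine (isLittleO_log_rpow_atTop (neg_pos.2 hr)).tendsto_div_nhds_zero.congr' ?_
  filter_upwards [eventually_gt_atTop 0] with t ht
  rw [rpow_neg ht.le, div_inv_eq_mul, mul_comm]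

lemma limsup_rpow_mul_log_le_of_le_mul_exp {r : ℝ} (hr : r < 0) {I : ℝ → ENNReal} {C : ℝ}
    (hC : 0 < C) (k : ℕ) {G : ℝ → ℝ} {L : ℝ}
    (hI : ∀ᶠ t in atTop, I t ≤ ENNReal.ofReal (C * t ^ k * exp (G t)))
    (hG : Tendsto (fun t => t ^ r * G t) atTop (𝓝 L)) :
    limsup (fun t : ℝ => ((t ^ r : ℝ) : EReal) * ENNReal.log (I t)) atTop ≤ (L : EReal) := by
  have hbound : ∀ᶠ t in atTop, ((t ^ r : ℝ) : EReal) * ENNReal.log (I t) ≤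
      ((t ^ r * log C + k * (t ^ r * log t) + t ^ r * G t : ℝ) : EReal) := by
    filter_upwards [hI, eventually_gt_atTop 0] with t hIt ht
    calc ((t ^ r : ℝ) : EReal) * ENNReal.log (I t)
        ≤ ((t ^ r : ℝ) : EReal) * ENNReal.log (ENNReal.ofReal (C * t ^ k * exp (G t))) :=
          mul_le_mul_of_nonneg_left (ENNReal.log_le_log_iff.2 hIt)
            (EReal.coe_nonneg.2 (rpow_nonneg ht.le r))
      _ = _ := by
          rw [ENNReal.log_ofReal_of_pos (by positivity), ← EReal.coe_mul,
            log_mul (by positivity) (exp_ne_zero _), log_mul hC.ne' (by positivity), log_pow,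
            log_exp]
          ring_nf
  have hlim : Tendsto (fun t : ℝ => t ^ r * log C + k * (t ^ r * log t) + t ^ r * G t) atTop
      (𝓝 L) := by
    have hpow : Tendsto (fun t : ℝ => t ^ r) atTop (𝓝 0) := by
      simpa using tendsto_rpow_neg_atTop (neg_pos.2 hr)
    simpa using ((hpow.mul_const (log C)).add
      ((tendsto_rpow_mul_log_atTop hr).const_mul (k : ℝ))).add hG
  exact (limsup_le_limsup hbound).trans_eq (EReal.tendsto_coe.2 hlim).limsup_eq

lemma lintegral_tail_le_of_le_hypg_moderate (n : ℕ) {d : ℝ} (hd : 0 ≤ d) {p : ℝ → ℝ → ℝ}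
    (hp_le : ∀ η t : ℝ, 0 < η → 0 < t → p η t ≤ d * hypg n η t) {t β x : ℝ} (ht : 1 ≤ t)
    (hβ : β ≤ 1) (hx0 : 0 < x) (hx : 4 ≤ x * t ^ (1 - β)) :
    ∫⁻ η in {η : ℝ | 0 < η ∧ x * t ^ (1 - β) + ((n : ℝ) - 1) * t ≤ η}, ENNReal.ofReal (p η t) ≤
      ENNReal.ofReal (d * n.factorial * exp (n + 1) * (4 / x) * t ^ (n + 1) *
        exp (-(x ^ 2 / 4) * t ^ (1 - 2 * β) + x * t ^ (-β))) := by
  have hslope := le_chernoff_slope_sub ht hβ hx0 hx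
  have hm : 0 < x * t ^ (-β) / 2 - 1 / t := lt_of_lt_of_le (by positivity) hslope
  have hinv : (x * t ^ (-β) / 2 - 1 / t)⁻¹ ≤ 4 / x * t := by
    simpa [div_div_eq_mul_div, mul_div_right_comm] using inv_anti₀ (by positivity) hslope
  refine (lintegral_tail_le_of_le_hypg n hd hp_le ht (sub_pos.1 hm) _).trans
    (ENNReal.ofReal_le_ofReal ?_)
  rw [chernoff_exponent_eq (by linarith), div_eq_mul_inv]
  calc _ ≤ d * n.factorial * t ^ n * exp (n + 1) *
        exp (-(x ^ 2 / 4) * t ^ (1 - 2 * β) + x * t ^ (-β)) * (4 / x * t) := by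
        gcongr
    _ = _ := by ring

lemma tendsto_rpow_mul_chernoff_exponent {β : ℝ} (hβ : β < 1) (x : ℝ) :
    Tendsto (fun t : ℝ => t ^ (2 * β - 1) * (-(x ^ 2 / 4) * t ^ (1 - 2 * β) + x * t ^ (-β)))
      atTop (𝓝 (-(x ^ 2 / 4))) := by
  have hdecay : Tendsto (fun t : ℝ => t ^ (β - 1)) atTop (𝓝 0) := by
    simpa using tendsto_rpow_neg_atTop (by linarith : 0 < 1 - β)
  refine (by simpa using (hdecay.const_mul x).const_add (-(x ^ 2 / 4)) :
    Tendsto (fun t : ℝ => -(x ^ 2 / 4) + x * t ^ (β - 1)) atTop _).congr' ?_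
  filter_upwards [eventually_gt_atTop 0] with t ht
  have hcancel : t ^ (2 * β - 1) * t ^ (1 - 2 * β) = 1 := by
    rw [← rpow_add ht]; norm_num
  have hdrop : t ^ (2 * β - 1) * t ^ (-β) = t ^ (β - 1) := by
    rw [← rpow_add ht]; ring_nf
  linear_combination (x ^ 2 / 4) * hcancel - x * hdrop

theorem mdp_upper_bound_upper_tail_general (n : ℕ) (β : ℝ)
    (hβ : β < 1 / 2) (d : ℝ) (hd : 1 < d)
    (p : ℝ → ℝ → ℝ)
    (hp_le : ∀ η t : ℝ, 0 < η → 0 < t → p η t ≤ d * hypg n η t)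
    (xtil : ℝ) (hx : 0 < xtil) :
    Filter.limsup
        (fun t : ℝ => ((t ^ (2 * β - 1) : ℝ) : EReal) *
          ENNReal.log (∫⁻ η in {η : ℝ | 0 < η ∧ xtil * t ^ (1 - β) + ((n : ℝ) - 1) * t ≤ η},
            ENNReal.ofReal (p η t)))
        Filter.atTop ≤
      ((-(xtil ^ 2 / 4) : ℝ) : EReal) := by
  have hd0 : 0 < d := one_pos.trans hd
  refine limsup_rpow_mul_log_le_of_le_mul_exp (by linarith)
    (C := d * n.factorial * exp (n + 1) * (4 / xtil)) (by positivity) (n + 1)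
    (G := fun t => -(xtil ^ 2 / 4) * t ^ (1 - 2 * β) + xtil * t ^ (-β)) ?_ ?_
  · filter_upwards [eventually_ge_atTop 1,
      (tendsto_rpow_atTop (by linarith : 0 < 1 - β)).eventually_ge_atTop (4 / xtil)]
      with t ht hlarge
    exact lintegral_tail_le_of_le_hypg_moderate n hd0.le hp_le ht (by linarith) hx
      ((div_le_iff₀' hx).1 hlarge)
  · exact tendsto_rpow_mul_chernoff_exponent (by linarith) xtil

/-- Upper-tail moderate deviation upper bound for the radial component of hyperbolic
Brownian motion: for every `x̃ > 0`,
`limsup_{t→∞} t^{2β-1} log P(t^{β-1}(D_n(t)-(n-1)t) ≥ x̃) ≤ -x̃²/4`. -/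
theorem mdp_upper_bound_upper_tail (n : ℕ) (hn : 2 ≤ n) (β : ℝ) (hβ0 : 0 < β)
    (hβ : β < 1 / 2) (d : ℝ) (hd : 1 < d)
    (p : ℝ → ℝ → ℝ) (hp : Measurable (Function.uncurry p))
    (hp_nonneg : ∀ η t : ℝ, 0 < η → 0 < t → 0 ≤ p η t)
    (hp_le : ∀ η t : ℝ, 0 < η → 0 < t → p η t ≤ d * hypg n η t)
    (xtil : ℝ) (hx : 0 < xtil) :
    Filter.limsup
        (fun t : ℝ => ((t ^ (2 * β - 1) : ℝ) : EReal) *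
          ENNReal.log (∫⁻ η in {η : ℝ | 0 < η ∧ xtil * t ^ (1 - β) + ((n : ℝ) - 1) * t ≤ η},
            ENNReal.ofReal (p η t)))
        Filter.atTop ≤
      ((-(xtil ^ 2 / 4) : ℝ) : EReal) :=
  mdp_upper_bound_upper_tail_general n β hβ d hd p hp_le xtil hx
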